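/- Let 0 ≤ δ < M, ε > 0, γ̃ > 0, and let μ₀ ≥ 1 be an integer with 2 + 2ε − (M−δ)/μ₀ > 0. Let J ⊂ ℝ be a compact interval, let 𝒞 := {ρ(cos φ, sin φ) : ρ > 0, φ ∈ J}, and let ω : 𝒞 → ℝ² be positively homogeneous of degree M. Assume there exists C₁ > 0 such that for every k ∈ ℤ² \ {0} and every γ' > 0, the one-dimensional Lebesgue measure of {φ ∈ J : |ω(cos φ, sin φ)·k| ≤ γ'‖k‖} is at most C₁ (γ')^{1/μ₀}. Then there exist C₂ > 0 and R₀ > 1 such that for all R ≥ R₀, the two-dimensional Lebesgue measure of ∪_{k ∈ ℤ²\{0}} ( {a ∈ 𝒞 : |ω(a)·k| ≤ γ̃‖k‖‖a‖^δ and ‖a‖^ε > ‖k‖} ) ∩ B_R is at most C₂ γ̃^{1/μ₀} R^{2 + 2ε − (M−δ)/μ₀}, where B_R is the closed ball of radius R centered at the origin in ℝ². -/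

import Mathlib

open Real MeasureTheory
open scoped RealInnerProductSpace ENNReal

noncomputable section

abbrev E2 := EuclideanSpace ℝ (Fin 2)

/-- The point of `ℝ²` (with the Euclidean norm) associated to an integer vector `k ∈ ℤ²`. -/
noncomputable def kv (k : Fin 2 → ℤ) : E2 :=
  EuclideanSpace.single 0 (k 0 : ℝ) + EuclideanSpace.single 1 (k 1 : ℝ)

/-- The unit vector `(cos φ, sin φ)` of `ℝ²`. -/
noncomputable def unitVec (φ : ℝ) : E2 :=
  EuclideanSpace.single 0 (Real.cos φ) + EuclideanSpace.single 1 (Real.sin φ)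

/-- The cone over the arc `{(cos φ, sin φ) : φ ∈ [φa, φb]}`. -/
def coneOf (φa φb : ℝ) : Set E2 :=
  {a | ∃ ρ : ℝ, 0 < ρ ∧ ∃ φ ∈ Set.Icc φa φb, a = ρ • unitVec φ}

/-!
Write a point of the cone as `ρ • unitVec φ`. On the dyadic annulus `t ≤ ρ ≤ 2t`, homogeneity
turns the resonance condition for `k` into `|⟪ω (unitVec φ), k⟫| ≤ γ̃ t^(δ-M) ‖k‖`, so the zone
of `k` lies in the polar image of `[t, 2t] × (angles of measure ≤ C₁ (γ̃ t^(δ-M))^(1/μ₀))`, whose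
area is at most `2t²` times that measure. Only the `O(t^(2ε))` lattice vectors with
`‖k‖ < (2t)^ε` occur, so the annulus contributes `O(γ̃^(1/μ₀) t^(2+2ε-(M-δ)/μ₀))`; since
`‖k‖ ≥ 1` the zones avoid the unit ball, and summing the geometric series over the annuli
`t = 2^j ≤ R` gives the bound.
-/

open Set

/- The area inequality needs no injectivity, so the angular interval may be longer than `2π`. -/
lemma volume_image_polarCoord_symm_le {S : Set (ℝ × ℝ)} (hS : MeasurableSet S) :
    volume (polarCoord.symm '' S) ≤ ∫⁻ p in S, ENNReal.ofReal |p.1| := by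
  simpa only [det_fderivPolarCoordSymm] using
    addHaar_image_le_lintegral_abs_det_fderiv volume hS
      fun p _ => (hasFDerivAt_polarCoord_symm p).hasFDerivWithinAt

lemma volume_image_polarCoord_symm_Icc_prod_le {c d : ℝ} (hc : 0 ≤ c) (B : Set ℝ) :
    volume (polarCoord.symm '' (Icc c d ×ˢ B))
      ≤ ENNReal.ofReal d * ENNReal.ofReal (d - c) * volume B := by
  have hS : MeasurableSet (Icc c d ×ˢ toMeasurable volume B) :=
    measurableSet_Icc.prod (measurableSet_toMeasurable _ _)
  calc volume (polarCoord.symm '' (Icc c d ×ˢ B))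
      ≤ volume (polarCoord.symm '' (Icc c d ×ˢ toMeasurable volume B)) :=
        measure_mono (image_mono (prod_mono le_rfl (subset_toMeasurable _ _)))
    _ ≤ ∫⁻ p in Icc c d ×ˢ toMeasurable volume B, ENNReal.ofReal |p.1| :=
        volume_image_polarCoord_symm_le hS
    _ ≤ ∫⁻ _ in Icc c d ×ˢ toMeasurable volume B, ENNReal.ofReal d :=
        setLIntegral_mono' hS fun p hp => ENNReal.ofReal_le_ofReal <| by
          rw [abs_of_nonneg (hc.trans hp.1.1)]; exact hp.1.2
    _ = ENNReal.ofReal d * ENNReal.ofReal (d - c) * volume B := by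
        rw [setLIntegral_const, Measure.volume_eq_prod, Measure.prod_prod, Real.volume_Icc,
          measure_toMeasurable, mul_assoc]

def measurableEquivRealProd : E2 ≃ᵐ ℝ × ℝ :=
  (MeasurableEquiv.toLp 2 (Fin 2 → ℝ)).symm.trans MeasurableEquiv.finTwoArrow

lemma measurePreserving_measurableEquivRealProd :
    MeasurePreserving measurableEquivRealProd volume volume :=
  (volume_preserving_finTwoArrow ℝ).comp
    (EuclideanSpace.volume_preserving_symm_measurableEquiv_toLp (Fin 2))

def polarMap (p : ℝ × ℝ) : E2 := p.1 • unitVec p.2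

lemma measurableEquivRealProd_polarMap (p : ℝ × ℝ) :
    measurableEquivRealProd (polarMap p) = polarCoord.symm p := by
  simp [measurableEquivRealProd, polarMap, unitVec, MeasurableEquiv.finTwoArrow]

lemma volume_polarMap_image (S : Set (ℝ × ℝ)) :
    volume (polarMap '' S) = volume (polarCoord.symm '' S) := by
  have : polarCoord.symm '' S = measurableEquivRealProd '' (polarMap '' S) := by
    rw [← image_comp]; exact image_congr fun p _ => (measurableEquivRealProd_polarMap p).symm
  rw [this, ← measurePreserving_measurableEquivRealProd.measure_preimage_equiv,
    measurableEquivRealProd.preimage_image]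

lemma volume_polarMap_image_Icc_prod_le {c d : ℝ} (hc : 0 ≤ c) (B : Set ℝ) :
    volume (polarMap '' (Icc c d ×ˢ B))
      ≤ ENNReal.ofReal d * ENNReal.ofReal (d - c) * volume B := by
  rw [volume_polarMap_image]
  exact volume_image_polarCoord_symm_Icc_prod_le hc B

lemma norm_smul_unitVec {ρ : ℝ} (hρ : 0 ≤ ρ) (φ : ℝ) : ‖ρ • unitVec φ‖ = ρ := by
  have : ‖unitVec φ‖ = 1 := by
    simp [EuclideanSpace.norm_eq, unitVec, Fin.sum_univ_two]
  rw [norm_smul, this, mul_one, Real.norm_of_nonneg hρ]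

lemma unitVec_mem_coneOf {φa φb φ : ℝ} (hφ : φ ∈ Icc φa φb) : unitVec φ ∈ coneOf φa φb :=
  ⟨1, one_pos, φ, hφ, (one_smul _ _).symm⟩

lemma abs_le_norm_kv (k : Fin 2 → ℤ) (i : Fin 2) : |(k i : ℝ)| ≤ ‖kv k‖ := by
  have : kv k i = k i := by fin_cases i <;> simp [kv]
  simpa [this] using PiLp.norm_apply_le (kv k) i

lemma one_le_norm_kv {k : Fin 2 → ℤ} (hk : k ≠ 0) : 1 ≤ ‖kv k‖ := by
  obtain ⟨i, hi⟩ := Function.ne_iff.mp hk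
  refine le_trans ?_ (abs_le_norm_kv k i)
  exact_mod_cast Int.one_le_abs hi

def intBox (d : ℕ) (N : ℝ) : Finset (Fin d → ℤ) :=
  Fintype.piFinset fun _ => Finset.Icc (-⌊N⌋) ⌊N⌋

lemma card_intBox_le {N : ℝ} (hN : 1 ≤ N) (d : ℕ) : ((intBox d N).card : ℝ) ≤ (3 * N) ^ d := by
  have hfloor : 0 ≤ ⌊N⌋ := Int.floor_nonneg.mpr (zero_le_one.trans hN)
  have hcard : ((Finset.Icc (-⌊N⌋) ⌊N⌋).card : ℝ) = 2 * ⌊N⌋ + 1 := by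
    rw [Int.card_Icc, ← Int.cast_natCast, Int.toNat_of_nonneg (by omega)]
    push_cast; ring
  rw [intBox, Fintype.card_piFinset, Finset.prod_const, Finset.card_univ, Fintype.card_fin,
    Nat.cast_pow, hcard]
  gcongr
  linarith [Int.floor_le N]

lemma mem_intBox_of_norm_kv_le {N : ℝ} {k : Fin 2 → ℤ} (hk : ‖kv k‖ ≤ N) : k ∈ intBox 2 N := by
  refine Fintype.mem_piFinset.mpr fun i => Finset.mem_Icc.mpr ?_
  obtain ⟨hlo, hhi⟩ := abs_le.mp ((abs_le_norm_kv k i).trans hk)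
  exact ⟨neg_le.mp (Int.le_floor.mpr (by push_cast; linarith)), Int.le_floor.mpr hhi⟩

lemma sum_range_succ_pow_rpow_le {b e R : ℝ} (hb : 1 < b) (he : 0 < e) {n : ℕ}
    (hn : b ^ n ≤ R) :
    ∑ j ∈ Finset.range (n + 1), (b ^ j) ^ e ≤ b ^ e / (b ^ e - 1) * R ^ e := by
  have hr : 1 < b ^ e := Real.one_lt_rpow hb he
  have hb0 : 0 ≤ b := by linarith
  calc ∑ j ∈ Finset.range (n + 1), (b ^ j) ^ e
      = ((b ^ e) ^ (n + 1) - 1) / (b ^ e - 1) := by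
        simp only [← Real.rpow_pow_comm hb0]
        exact geom_sum_eq hr.ne' _
    _ ≤ (b ^ e) ^ (n + 1) / (b ^ e - 1) := by gcongr; linarith
    _ = b ^ e / (b ^ e - 1) * (b ^ n) ^ e := by
        rw [pow_succ, Real.rpow_pow_comm hb0]; ring
    _ ≤ b ^ e / (b ^ e - 1) * R ^ e := by gcongr

def resonantZone (φa φb : ℝ) (ω : E2 → E2) (γ δ ε : ℝ) (k : Fin 2 → ℤ) : Set E2 :=
  {a ∈ coneOf φa φb | |⟪ω a, kv k⟫| ≤ γ * ‖kv k‖ * ‖a‖ ^ δ ∧ ‖kv k‖ < ‖a‖ ^ ε}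

def badAngles (φa φb : ℝ) (ω : E2 → E2) (k : Fin 2 → ℤ) (γ' : ℝ) : Set ℝ :=
  {φ ∈ Icc φa φb | |⟪ω (unitVec φ), kv k⟫| ≤ γ' * ‖kv k‖}

def annulus (t : ℝ) : Set E2 := {a | t ≤ ‖a‖ ∧ ‖a‖ ≤ 2 * t}

section ResonantZones

variable {φa φb : ℝ} {ω : E2 → E2} {M δ ε γ : ℝ}

lemma abs_inner_unitVec_le_of_homogeneous
    (hhom : ∀ c : ℝ, 0 < c → ∀ a ∈ coneOf φa φb, ω (c • a) = c ^ M • ω a)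
    {ρ φ c : ℝ} (hρ : 0 < ρ) (hφ : φ ∈ Icc φa φb) {x : E2}
    (h : |⟪ω (ρ • unitVec φ), x⟫| ≤ c * ρ ^ δ) :
    |⟪ω (unitVec φ), x⟫| ≤ c * ρ ^ (δ - M) := by
  have hρM : 0 < ρ ^ M := Real.rpow_pos_of_pos hρ M
  rw [hhom ρ hρ _ (unitVec_mem_coneOf hφ), real_inner_smul_left, abs_mul, abs_of_pos hρM,
    show ρ ^ δ = ρ ^ (δ - M) * ρ ^ M by rw [← Real.rpow_add hρ, sub_add_cancel],
    ← mul_assoc, mul_comm] at h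
  exact le_of_mul_le_mul_right h hρM

lemma one_le_norm_of_mem_iUnion_resonantZone (hε : 0 < ε) {a : E2}
    (ha : a ∈ ⋃ (k : Fin 2 → ℤ) (_ : k ≠ 0), resonantZone φa φb ω γ δ ε k) : 1 ≤ ‖a‖ := by
  obtain ⟨k, hk, ha⟩ := mem_iUnion₂.mp ha
  by_contra! h
  have : ‖a‖ ^ ε ≤ 1 := Real.rpow_le_one (norm_nonneg a) h.le hε.le
  linarith [one_le_norm_kv hk, ha.2.2]

lemma resonantZone_inter_annulus_subset
    (hhom : ∀ c : ℝ, 0 < c → ∀ a ∈ coneOf φa φb, ω (c • a) = c ^ M • ω a)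
    (hγ : 0 ≤ γ) (hδM : δ ≤ M) (hε : 0 ≤ ε) {t : ℝ} (ht : 0 < t) :
    (⋃ (k : Fin 2 → ℤ) (_ : k ≠ 0), resonantZone φa φb ω γ δ ε k) ∩ annulus t ⊆
      ⋃ k ∈ (intBox 2 ((2 * t) ^ ε)).erase 0,
        polarMap '' (Icc t (2 * t) ×ˢ badAngles φa φb ω k (γ * t ^ (δ - M))) := by
  rintro _ ⟨ha, hta, hat⟩
  obtain ⟨k, hk, ⟨ρ, hρ, φ, hφ, rfl⟩, hres, hsmall⟩ := mem_iUnion₂.mp ha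
  rw [norm_smul_unitVec hρ.le] at hta hat hres hsmall
  have hbox : k ∈ intBox 2 ((2 * t) ^ ε) :=
    mem_intBox_of_norm_kv_le (hsmall.le.trans (Real.rpow_le_rpow hρ.le hat hε))
  have hbad : φ ∈ badAngles φa φb ω k (γ * t ^ (δ - M)) := by
    refine ⟨hφ, (abs_inner_unitVec_le_of_homogeneous hhom hρ hφ hres).trans ?_⟩
    rw [mul_right_comm]
    exact mul_le_mul_of_nonneg_right (mul_le_mul_of_nonneg_left
      (Real.rpow_le_rpow_of_nonpos ht hta (sub_nonpos.mpr hδM)) hγ) (norm_nonneg _)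
  exact mem_biUnion (Finset.mem_erase.mpr ⟨hk, hbox⟩) ⟨(ρ, φ), ⟨⟨hta, hat⟩, hbad⟩, rfl⟩

lemma volume_resonantZone_inter_annulus_le
    (hhom : ∀ c : ℝ, 0 < c → ∀ a ∈ coneOf φa φb, ω (c • a) = c ^ M • ω a)
    {C₁ u : ℝ} (hC₁ : 0 ≤ C₁) (hmeas : ∀ k : Fin 2 → ℤ, k ≠ 0 → ∀ γ' : ℝ, 0 < γ' →
      volume (badAngles φa φb ω k γ') ≤ ENNReal.ofReal (C₁ * γ' ^ u))
    (hγ : 0 < γ) (hδM : δ ≤ M) (hε : 0 ≤ ε) {t : ℝ} (ht : 1 ≤ t) :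
    volume ((⋃ (k : Fin 2 → ℤ) (_ : k ≠ 0), resonantZone φa φb ω γ δ ε k) ∩ annulus t)
      ≤ ENNReal.ofReal (18 * 2 ^ (2 * ε) * C₁ * γ ^ u * t ^ (2 + 2 * ε - (M - δ) * u)) := by
  have ht0 : 0 < t := zero_lt_one.trans_le ht
  set K := (intBox 2 ((2 * t) ^ ε)).erase 0
  set v := 2 * t * t * (C₁ * (γ * t ^ (δ - M)) ^ u) with hv
  have hpiece : ∀ k ∈ K, volume (polarMap '' (Icc t (2 * t) ×ˢ
      badAngles φa φb ω k (γ * t ^ (δ - M)))) ≤ ENNReal.ofReal v := by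
    intro k hk
    calc volume (polarMap '' (Icc t (2 * t) ×ˢ badAngles φa φb ω k (γ * t ^ (δ - M))))
        ≤ ENNReal.ofReal (2 * t) * ENNReal.ofReal (2 * t - t) *
            volume (badAngles φa φb ω k (γ * t ^ (δ - M))) :=
          volume_polarMap_image_Icc_prod_le ht0.le _
      _ ≤ ENNReal.ofReal (2 * t) * ENNReal.ofReal (2 * t - t) *
            ENNReal.ofReal (C₁ * (γ * t ^ (δ - M)) ^ u) :=
          mul_le_mul_right (hmeas k (Finset.ne_of_mem_erase hk) _
            (mul_pos hγ (Real.rpow_pos_of_pos ht0 _))) _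
      _ = ENNReal.ofReal v := by
          rw [← ENNReal.ofReal_mul (by positivity), ← ENNReal.ofReal_mul (by nlinarith), hv]
          ring_nf
  have hcard : (K.card : ℝ) ≤ (3 * (2 * t) ^ ε) ^ 2 :=
    (Nat.cast_le.mpr (Finset.card_erase_le)).trans
      (card_intBox_le (Real.one_le_rpow (by linarith) hε) 2)
  calc volume ((⋃ (k : Fin 2 → ℤ) (_ : k ≠ 0), resonantZone φa φb ω γ δ ε k) ∩ annulus t)
      ≤ ∑ k ∈ K, volume (polarMap '' (Icc t (2 * t) ×ˢ
          badAngles φa φb ω k (γ * t ^ (δ - M)))) :=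
        (measure_mono (resonantZone_inter_annulus_subset hhom hγ.le hδM hε ht0)).trans
          (measure_biUnion_finset_le _ _)
    _ ≤ ∑ _k ∈ K, ENNReal.ofReal v := Finset.sum_le_sum hpiece
    _ = ENNReal.ofReal (K.card * v) := by
        rw [Finset.sum_const, nsmul_eq_mul, ENNReal.ofReal_mul (Nat.cast_nonneg _),
          ENNReal.ofReal_natCast]
    _ ≤ ENNReal.ofReal ((3 * (2 * t) ^ ε) ^ 2 * v) := by gcongr
    _ = _ := by
        congr 1
        rw [hv, Real.mul_rpow zero_le_two ht0.le, Real.mul_rpow hγ.le (by positivity),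
          show 2 + 2 * ε - (M - δ) * u = 2 + ε * 2 + (δ - M) * u by ring,
          Real.rpow_add ht0, Real.rpow_add ht0, Real.rpow_mul ht0.le ε 2,
          Real.rpow_mul ht0.le (δ - M) u, mul_comm 2 ε, Real.rpow_mul zero_le_two ε 2]
        simp only [Real.rpow_two]
        ring

end ResonantZones

lemma inter_closedBall_subset_biUnion_annulus {Z : Set E2} (hZ : ∀ a ∈ Z, 1 ≤ ‖a‖) {R : ℝ}
    {n : ℕ} (hR : R < 2 ^ (n + 1)) :
    Z ∩ Metric.closedBall 0 R ⊆ ⋃ j ∈ Finset.range (n + 1), Z ∩ annulus (2 ^ j) := by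
  rintro a ⟨ha, haR⟩
  rw [mem_closedBall_zero_iff] at haR
  obtain ⟨j, hja, haj⟩ := exists_nat_pow_near (hZ a ha) one_lt_two
  have hjn : j < n + 1 := (pow_lt_pow_iff_right₀ (one_lt_two : (1 : ℝ) < 2)).mp (by linarith)
  exact mem_biUnion (Finset.mem_range.mpr hjn) ⟨ha, hja, by rw [← pow_succ']; exact haj.le⟩

theorem stmt14_general (M δ ε γt : ℝ) (hδM : δ < M) (hε : 0 < ε) (hγ : 0 < γt)
    (μ₀ : ℕ) (hexp : 0 < 2 + 2 * ε - (M - δ) / (μ₀ : ℝ))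
    (φa φb : ℝ)
    (ω : E2 → E2)
    (hhom : ∀ c : ℝ, 0 < c → ∀ a ∈ coneOf φa φb, ω (c • a) = c ^ M • ω a)
    (C₁ : ℝ) (hC₁ : 0 < C₁)
    (hmeas : ∀ k : Fin 2 → ℤ, k ≠ 0 → ∀ γ' : ℝ, 0 < γ' →
      volume {φ ∈ Set.Icc φa φb | |⟪ω (unitVec φ), kv k⟫| ≤ γ' * ‖kv k‖}
        ≤ ENNReal.ofReal (C₁ * γ' ^ (1 / (μ₀ : ℝ)))) :
    ∃ C₂ : ℝ, 0 < C₂ ∧ ∃ R₀ : ℝ, 1 < R₀ ∧ ∀ R : ℝ, R₀ ≤ R →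
      volume ((⋃ (k : Fin 2 → ℤ) (_ : k ≠ 0),
          {a ∈ coneOf φa φb |
            |⟪ω a, kv k⟫| ≤ γt * ‖kv k‖ * ‖a‖ ^ δ ∧ ‖kv k‖ < ‖a‖ ^ ε})
          ∩ Metric.closedBall (0 : E2) R)
        ≤ ENNReal.ofReal
            (C₂ * γt ^ (1 / (μ₀ : ℝ)) * R ^ (2 + 2 * ε - (M - δ) / (μ₀ : ℝ))) := by
  set u := 1 / (μ₀ : ℝ)
  set e := 2 + 2 * ε - (M - δ) / (μ₀ : ℝ) with he
  rw [div_eq_mul_one_div] at he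
  set A := 18 * 2 ^ (2 * ε) * C₁ * γt ^ u with hA
  have hr : 1 < (2 : ℝ) ^ e := Real.one_lt_rpow one_lt_two hexp
  refine ⟨18 * 2 ^ (2 * ε) * C₁ * (2 ^ e / (2 ^ e - 1)),
    mul_pos (by positivity) (div_pos (by positivity) (sub_pos.mpr hr)), 2, one_lt_two,
    fun R hR => ?_⟩
  obtain ⟨n, hnR, hRn⟩ := exists_nat_pow_near (one_le_two.trans hR) one_lt_two
  set Z := ⋃ (k : Fin 2 → ℤ) (_ : k ≠ 0), resonantZone φa φb ω γt δ ε k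
  have hZ : ∀ a ∈ Z, 1 ≤ ‖a‖ := fun a => one_le_norm_of_mem_iUnion_resonantZone hε
  calc volume (Z ∩ Metric.closedBall 0 R)
      ≤ ∑ j ∈ Finset.range (n + 1), volume (Z ∩ annulus (2 ^ j)) :=
        (measure_mono (inter_closedBall_subset_biUnion_annulus hZ hRn)).trans
          (measure_biUnion_finset_le _ _)
    _ ≤ ∑ j ∈ Finset.range (n + 1), ENNReal.ofReal (A * ((2 : ℝ) ^ j) ^ e) :=
        Finset.sum_le_sum fun j _ => he ▸ volume_resonantZone_inter_annulus_le hhom hC₁.le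
          hmeas hγ hδM.le hε.le (one_le_pow₀ one_le_two)
    _ = ENNReal.ofReal (A * ∑ j ∈ Finset.range (n + 1), ((2 : ℝ) ^ j) ^ e) := by
        rw [Finset.mul_sum, ENNReal.ofReal_sum_of_nonneg fun _ _ => by positivity]
    _ ≤ ENNReal.ofReal (A * (2 ^ e / (2 ^ e - 1) * R ^ e)) := by
        gcongr
        exact sum_range_succ_pow_rpow_le one_lt_two hexp hnR
    _ = _ := by rw [hA]; congr 1; ring

/-- Measure estimate for the union of the resonant zones intersected with a ball:
from a Rüssmann-type estimate on the unit circle one deduces the bound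
`C₂ γ̃^{1/μ₀} R^{2+2ε−(M−δ)/μ₀}` for the measure in `B_R`. -/
theorem stmt14 (M δ ε γt : ℝ) (hδ0 : 0 ≤ δ) (hδM : δ < M) (hε : 0 < ε) (hγ : 0 < γt)
    (μ₀ : ℕ) (hμ₀ : 1 ≤ μ₀) (hexp : 0 < 2 + 2 * ε - (M - δ) / (μ₀ : ℝ))
    (φa φb : ℝ) (hJ : φa ≤ φb)
    (ω : E2 → E2)
    (hhom : ∀ c : ℝ, 0 < c → ∀ a ∈ coneOf φa φb, ω (c • a) = c ^ M • ω a)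
    (C₁ : ℝ) (hC₁ : 0 < C₁)
    (hmeas : ∀ k : Fin 2 → ℤ, k ≠ 0 → ∀ γ' : ℝ, 0 < γ' →
      volume {φ ∈ Set.Icc φa φb | |⟪ω (unitVec φ), kv k⟫| ≤ γ' * ‖kv k‖}
        ≤ ENNReal.ofReal (C₁ * γ' ^ (1 / (μ₀ : ℝ)))) :
    ∃ C₂ : ℝ, 0 < C₂ ∧ ∃ R₀ : ℝ, 1 < R₀ ∧ ∀ R : ℝ, R₀ ≤ R →
      volume ((⋃ (k : Fin 2 → ℤ) (_ : k ≠ 0),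
          {a ∈ coneOf φa φb |
            |⟪ω a, kv k⟫| ≤ γt * ‖kv k‖ * ‖a‖ ^ δ ∧ ‖kv k‖ < ‖a‖ ^ ε})
          ∩ Metric.closedBall (0 : E2) R)
        ≤ ENNReal.ofReal
            (C₂ * γt ^ (1 / (μ₀ : ℝ)) * R ^ (2 + 2 * ε - (M - δ) / (μ₀ : ℝ))) :=
  stmt14_general M δ ε γt hδM hε hγ μ₀ hexp φa φb ω hhom C₁ hC₁ hmeas
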